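/- arXiv:1208.5988 — 3 statements merged into one kernel-verified Lean document; each statement's English description precedes it below -/
import Mathlib

section
/- The entropy value of the shrinking circle: the circle of radius √2 centered at the origin in EuclideanSpace ℝ (Fin 2) satisfies F_{0,1}(S¹(√2)) = (4π)^{-1/2} ∫_{S¹(√2)} exp(-‖x‖²/4) dμ = √(2π/e), where μ is the 1-dimensional Hausdorff measure on EuclideanSpace ℝ (Fin 2). (This is the value λ(S¹) = √(2π/e) ≈ 1.5203.) -/
/-!
Parametrize the circle of radius `R` by `θ ↦ R e^{iθ}`. This map is `R`-Lipschitz, which bounds the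
length of the circle by `2πR`. Conversely, a chord subtending an angle `u` has length
`2R |sin (u/2)| ≥ R (|u| - |u|³/24)`, so on arcs of angle `δ` the parametrization is antilipschitz
with constant `(R (1 - δ²/24))⁻¹`; cutting the circle into `N` such arcs gives the lower bound
`2πR (1 - (2π/N)²/24)`, which tends to `2πR`. On the circle of radius `√2` the Gaussian weight is
the constant `e^{-1/2}`, so `F_{0,1} = (4π)^{-1/2} e^{-1/2} · 2π√2 = √(2π/e)`.
-/

open MeasureTheory Real ENNReal

/-- The Gaussian surface area `F_{x₀,t₀}(Σ)` of a set `Σ ⊆ ℝ^{n+1}`, computed with respect to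
the `n`-dimensional Hausdorff measure, with values in `[0,∞]`. -/
noncomputable def gaussianArea (n : ℕ) (x₀ : EuclideanSpace ℝ (Fin (n + 1))) (t₀ : ℝ)
    (S : Set (EuclideanSpace ℝ (Fin (n + 1)))) : ℝ≥0∞ :=
  ENNReal.ofReal ((4 * π * t₀) ^ (-(n : ℝ) / 2)) *
    ∫⁻ x in S, ENNReal.ofReal (Real.exp (-‖x - x₀‖ ^ 2 / (4 * t₀))) ∂(μH[(n : ℝ)])

open Metric Set

theorem dist_circleMap (c : ℂ) (R s t : ℝ) :
    dist (circleMap c R s) (circleMap c R t) = |R| * |2 * Real.sin ((s - t) / 2)| := by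
  have h : circleMap c R s - circleMap c R t
      = circleMap 0 R t * (Complex.exp (Complex.I * ↑(s - t)) - 1) := by
    simp only [circleMap, zero_add, Complex.ofReal_sub, mul_sub, mul_one, mul_assoc,
      ← Complex.exp_add]
    ring_nf
  rw [dist_eq_norm, h, norm_mul, norm_circleMap_zero, Complex.norm_exp_I_mul_ofReal_sub_one,
    Real.norm_eq_abs]

theorem abs_sub_mul_le_dist_circleMap (c : ℂ) (R s t : ℝ) :
    |R| * (|s - t| - |s - t| ^ 3 / 24) ≤ dist (circleMap c R s) (circleMap c R t) := by
  rw [dist_circleMap, abs_mul, abs_two]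
  gcongr
  have hsin : |(s - t) / 2| - |(s - t) / 2| ^ 3 / 6 ≤ |Real.sin ((s - t) / 2)| := by
    linarith [abs_sub_abs_le_abs_sub ((s - t) / 2) (Real.sin ((s - t) / 2)),
      abs_sub_sin_le ((s - t) / 2)]
  rw [abs_div, abs_two] at hsin
  linarith

theorem hausdorffMeasure_le_mul_hausdorffMeasure_image {X Y : Type*} [EMetricSpace X]
    [MeasurableSpace X] [BorelSpace X] [EMetricSpace Y] [MeasurableSpace Y] [BorelSpace Y]
    {f : X → Y} {s : Set X} {K : NNReal} (hf : AntilipschitzWith K (s.domRestrict f)) {d : ℝ}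
    (hd : 0 ≤ d) : μH[d] s ≤ (K : ℝ≥0∞) ^ d * μH[d] (f '' s) := by
  have h := hf.le_hausdorffMeasure_image hd univ
  rwa [image_univ, range_domRestrict, ← isometry_subtype_coe.hausdorffMeasure_image (Or.inl hd),
    image_univ, Subtype.range_coe] at h

theorem antilipschitzWith_domRestrict_circleMap_Ico (c : ℂ) {R : ℝ} (hR : 0 < R) (a : ℝ) {δ : ℝ}
    (hδ : δ ^ 2 < 24) :
    AntilipschitzWith (Real.toNNReal (R * (1 - δ ^ 2 / 24)))⁻¹
      ((Ico a (a + δ)).domRestrict (circleMap c R)) := by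
  have hK : 0 < R * (1 - δ ^ 2 / 24) := by nlinarith
  refine AntilipschitzWith.of_le_mul_dist fun ⟨s, hs⟩ ⟨t, ht⟩ => ?_
  change dist s t ≤ _ * dist (circleMap c R s) (circleMap c R t)
  rw [NNReal.coe_inv, Real.coe_toNNReal _ hK.le, Real.dist_eq, inv_mul_eq_div,
    le_div_iff₀ hK]
  have hst : |s - t| ≤ δ := by
    simpa using abs_sub_le_of_le_of_le hs.1 hs.2.le ht.1 ht.2.le
  calc |s - t| * (R * (1 - δ ^ 2 / 24)) ≤ |R| * (|s - t| - |s - t| ^ 3 / 24) := by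
        rw [abs_of_pos hR]
        have : |s - t| ^ 2 ≤ δ ^ 2 := pow_le_pow_left₀ (abs_nonneg _) hst 2
        nlinarith [mul_nonneg (mul_nonneg hR.le (abs_nonneg (s - t))) (sub_nonneg.2 this)]
    _ ≤ _ := abs_sub_mul_le_dist_circleMap c R s t

theorem ofReal_le_hausdorffMeasure_circleMap_image_Ico (c : ℂ) {R : ℝ} (hR : 0 < R) (a : ℝ)
    {δ : ℝ} (hδ : δ ^ 2 < 24) :
    ENNReal.ofReal (R * (1 - δ ^ 2 / 24) * δ) ≤ μH[1] (circleMap c R '' Ico a (a + δ)) := by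
  have hK : 0 < R * (1 - δ ^ 2 / 24) := by nlinarith
  have h := hausdorffMeasure_le_mul_hausdorffMeasure_image
    (antilipschitzWith_domRestrict_circleMap_Ico c hR a hδ) zero_le_one
  rw [hausdorffMeasure_real, Real.volume_Ico, add_sub_cancel_left, ENNReal.rpow_one,
    ENNReal.coe_inv (by simpa using hK), ← ENNReal.div_eq_inv_mul,
    ENNReal.le_div_iff_mul_le (Or.inl (by simpa using hK)) (Or.inl ENNReal.coe_ne_top)] at h
  rwa [ENNReal.ofReal_mul hK.le, mul_comm]

theorem sum_measure_image_le_measure_image {α β ι : Type*} [MeasurableSpace β] (μ : Measure β)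
    {f : α → β} {s : Set α} (hf : InjOn f s) (I : Finset ι) {t : ι → Set α}
    (hts : ∀ i ∈ I, t i ⊆ s) (ht : (I : Set ι).PairwiseDisjoint t)
    (hmeas : ∀ i ∈ I, MeasurableSet (f '' t i)) :
    ∑ i ∈ I, μ (f '' t i) ≤ μ (f '' s) := by
  rw [← measure_biUnion_finset _ hmeas]
  · exact measure_mono (iUnion₂_subset fun i hi => image_mono (hts i hi))
  · intro i hi j hj hij
    rw [Function.onFun, disjoint_iff_inter_eq_empty, ← hf.image_inter (hts i hi) (hts j hj),
      disjoint_iff_inter_eq_empty.1 (ht hi hj hij), image_empty]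

theorem ofReal_le_hausdorffMeasure_sphere (c : ℂ) {R : ℝ} (hR : 0 < R) {N : ℕ} (hN : 2 ≤ N) :
    ENNReal.ofReal (R * (1 - (2 * π / N) ^ 2 / 24) * (2 * π)) ≤ μH[1] (sphere c R) := by
  set δ := 2 * π / N with hδ_def
  have hN0 : (0 : ℝ) < N := by positivity
  have hNδ : N * δ = 2 * π := by rw [hδ_def]; field_simp
  have hδ0 : 0 ≤ δ := by positivity
  have hδ24 : δ ^ 2 < 24 := by
    have : δ ≤ π := by
      rw [hδ_def, div_le_iff₀ hN0]
      nlinarith [pi_pos, (show (2 : ℝ) ≤ N by exact_mod_cast hN)]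
    nlinarith [pi_lt_four]
  let t : ℕ → Set ℝ := fun k => Ico (k * δ) (k * δ + δ)
  have hinj : InjOn (circleMap c R) (Ico 0 (2 * π)) :=
    injOn_circleMap_of_abs_sub_le' hR.ne' (by simp)
  have hts : ∀ k ∈ Finset.range N, t k ⊆ Ico 0 (2 * π) := by
    intro k hk
    have hk : (k : ℝ) + 1 ≤ N := by exact_mod_cast Finset.mem_range.1 hk
    refine Ico_subset_Ico (by positivity) ?_
    nlinarith
  have ht : (Finset.range N : Set ℕ).PairwiseDisjoint t := fun i _ j _ hij => by
    have hmono : Monotone fun k : ℕ => k * δ := fun i j hij =>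
      mul_le_mul_of_nonneg_right (by exact_mod_cast hij) hδ0
    simpa [t, add_mul] using hmono.pairwise_disjoint_on_Ico_succ hij
  calc ENNReal.ofReal (R * (1 - δ ^ 2 / 24) * (2 * π))
      = ∑ k ∈ Finset.range N, ENNReal.ofReal (R * (1 - δ ^ 2 / 24) * δ) := by
        rw [Finset.sum_const, Finset.card_range, nsmul_eq_mul, ← ENNReal.ofReal_natCast,
          ← ENNReal.ofReal_mul hN0.le, ← hNδ]
        ring_nf
    _ ≤ ∑ k ∈ Finset.range N, μH[1] (circleMap c R '' t k) :=
        Finset.sum_le_sum fun k _ => ofReal_le_hausdorffMeasure_circleMap_image_Ico c hR _ hδ24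
    _ ≤ μH[1] (circleMap c R '' Ico 0 (2 * π)) :=
        sum_measure_image_le_measure_image _ hinj _ hts ht fun k hk =>
          measurableSet_Ico.image_of_continuousOn_injOn (continuous_circleMap c R).continuousOn
            (hinj.mono (hts k hk))
    _ ≤ μH[1] (sphere c R) :=
        measure_mono (image_subset_iff.2 fun θ _ => circleMap_mem_sphere c hR.le θ)

theorem Complex.hausdorffMeasure_sphere (c : ℂ) {R : ℝ} (hR : 0 < R) :
    μH[1] (sphere c R) = ENNReal.ofReal (2 * π * R) := by
  apply le_antisymm
  · have h := (lipschitzWith_circleMap c R).hausdorffMeasure_image_le zero_le_one (Ioc 0 (2 * π))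
    rwa [image_circleMap_Ioc, abs_of_pos hR, hausdorffMeasure_real, Real.volume_Ioc, sub_zero,
      ENNReal.rpow_one, Real.nnabs_of_nonneg hR.le, ENNReal.ofNNReal_toNNReal, mul_comm,
      ← ENNReal.ofReal_mul (by positivity)] at h
  · have hlim : Filter.Tendsto (fun N : ℕ => R * (1 - (2 * π / N) ^ 2 / 24) * (2 * π))
        Filter.atTop (nhds (2 * π * R)) := by
      have h0 := tendsto_const_div_atTop_nhds_zero_nat (2 * π)
      simpa [mul_comm] using
        ((((h0.pow 2).div_const 24).const_sub 1).const_mul R).mul_const (2 * π)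
    exact le_of_tendsto (ENNReal.tendsto_ofReal hlim)
      (Filter.eventually_atTop.2 ⟨2, fun N hN => ofReal_le_hausdorffMeasure_sphere c hR hN⟩)

theorem hausdorffMeasure_sphere_of_finrank_eq_two {E : Type*} [NormedAddCommGroup E]
    [InnerProductSpace ℝ E] [MeasurableSpace E] [BorelSpace E] (hE : Module.finrank ℝ E = 2)
    (x : E) {r : ℝ} (hr : 0 < r) : μH[1] (sphere x r) = ENNReal.ofReal (2 * π * r) := by
  have : FiniteDimensional ℝ E := Module.finite_of_finrank_eq_succ hE
  let e : ℂ ≃ₗᵢ[ℝ] E := Complex.orthonormalBasisOneI.repr.trans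
    ((stdOrthonormalBasis ℝ E).reindex (finCongr hE)).repr.symm
  rw [← e.apply_symm_apply x, ← e.image_sphere,
    e.isometry.hausdorffMeasure_image (Or.inl zero_le_one), Complex.hausdorffMeasure_sphere _ hr]

theorem gaussianArea_one_sphere (x₀ : EuclideanSpace ℝ (Fin 2)) (t₀ : ℝ) {r : ℝ} (hr : 0 < r) :
    gaussianArea 1 x₀ t₀ (sphere x₀ r) =
      ENNReal.ofReal
        ((4 * π * t₀) ^ (-1 / 2 : ℝ) * (Real.exp (-r ^ 2 / (4 * t₀)) * (2 * π * r))) := by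
  have hconst : ∀ x ∈ sphere x₀ r,
      ENNReal.ofReal (Real.exp (-‖x - x₀‖ ^ 2 / (4 * t₀))) =
        ENNReal.ofReal (Real.exp (-r ^ 2 / (4 * t₀))) := fun x hx => by
    rw [← dist_eq_norm, mem_sphere.1 hx]
  rw [gaussianArea, Nat.cast_one, setLIntegral_congr_fun isClosed_sphere.measurableSet hconst,
    setLIntegral_const,
    hausdorffMeasure_sphere_of_finrank_eq_two finrank_euclideanSpace_fin x₀ hr,
    ← ENNReal.ofReal_mul (by positivity), ← ENNReal.ofReal_mul' (by positivity)]

/-- The entropy of the shrinking circle: `F_{0,1}` of the circle of radius `√2` in `ℝ²`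
equals `√(2π/e)`. -/
theorem gaussianArea_shrinking_circle :
    gaussianArea 1 0 1 (Metric.sphere (0 : EuclideanSpace ℝ (Fin 2)) (Real.sqrt 2)) =
      ENNReal.ofReal (Real.sqrt (2 * π / Real.exp 1)) := by
  rw [gaussianArea_one_sphere 0 1 (by positivity)]
  congr 1
  have hexp : Real.exp (-√2 ^ 2 / (4 * 1)) = (√(Real.exp 1))⁻¹ := by
    rw [Real.sq_sqrt zero_le_two, Real.sqrt_eq_rpow, ← Real.exp_mul, ← Real.exp_neg]
    norm_num
  have hpow : (4 * π * 1) ^ (-1 / 2 : ℝ) = (2 * √π)⁻¹ := by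
    rw [mul_one, neg_div, Real.rpow_neg (by positivity), ← Real.sqrt_eq_rpow,
      Real.sqrt_mul' _ pi_pos.le, show (4 : ℝ) = 2 ^ 2 by norm_num, Real.sqrt_sq zero_le_two]
  have hπ : √π ^ 2 = π := Real.sq_sqrt pi_pos.le
  have : 0 < √π := Real.sqrt_pos.2 pi_pos
  rw [hexp, hpow, Real.sqrt_div' _ (exp_pos 1).le, Real.sqrt_mul' _ pi_pos.le]
  field_simp
  rw [hπ]
end

section
/- For any n ≥ 1 and any radius R > 0, the Gaussian surface area of the sphere Sⁿ(R) = Metric.sphere 0 R in EuclideanSpace ℝ (Fin (n+1)) centered at the origin, as a function of the scale t₀ > 0, is maximized at t₀ = R²/(2n): for all t₀ > 0, F_{0,t₀}(Sⁿ(R)) ≤ F_{0, R²/(2n)}(Sⁿ(R)), where F_{0,t₀}(Σ) = (4π t₀)^{-n/2} ∫_Σ exp(-‖x‖²/(4 t₀)) dμ and μ is the n-dimensional Hausdorff measure. -/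
/-!
On the sphere `‖x‖ = R` the Gaussian weight is constant, so `F_{0,t}(Sⁿ(R))` is
`(4πt)^{-n/2} e^{-R²/(4t)}` times the area of the sphere. In the variable `s = R²/(4t)` this is a
constant multiple of `s^{n/2} e^{-s}`, which `1 + x ≤ eˣ` shows to be maximal at `s = n/2`,
i.e. at `t = R²/(2n)`.
-/

open MeasureTheory Real ENNReal

namespace Real

theorem rpow_mul_exp_neg_le_rpow_mul_exp_neg {a s : ℝ} (ha : 0 < a) (hs : 0 ≤ s) :
    s ^ a * exp (-s) ≤ a ^ a * exp (-a) := by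
  -- `s / a ≤ exp (s / a - 1)`, raised to the power `a`
  have hbase : s * exp (-(s / a)) ≤ a * exp (-1) :=
    calc s * exp (-(s / a)) ≤ a * exp (s / a - 1) * exp (-(s / a)) := by
          gcongr
          have h := add_one_le_exp (s / a - 1)
          rwa [sub_add_cancel, div_le_iff₀' ha] at h
      _ = a * exp (-1) := by rw [mul_assoc, ← exp_add]; ring_nf
  have key := rpow_le_rpow (by positivity) hbase ha.le
  rwa [mul_rpow hs (exp_pos _).le, mul_rpow ha.le (exp_pos _).le, ← exp_mul, ← exp_mul,
    neg_one_mul, neg_mul, div_mul_cancel₀ _ ha.ne'] at key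

theorem rpow_neg_mul_exp_neg_div_le {a c t : ℝ} (ha : 0 < a) (hc : 0 < c) (ht : 0 < t) :
    t ^ (-a) * exp (-(c / t)) ≤ (c / a) ^ (-a) * exp (-(c / (c / a))) := by
  have hscale : ∀ {u : ℝ}, 0 < u → u ^ (-a) = c ^ (-a) * (c / u) ^ a := fun hu => by
    rw [div_rpow hc.le hu.le, rpow_neg hc.le, rpow_neg hu.le]
    field_simp
  rw [hscale ht, hscale (div_pos hc ha), div_div_cancel₀ hc.ne', mul_assoc, mul_assoc]
  exact mul_le_mul_of_nonneg_left
    (rpow_mul_exp_neg_le_rpow_mul_exp_neg ha (div_pos hc ht).le) (rpow_nonneg hc.le _)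

end Real

theorem heatKernel_le_self_shrinking_scale {n R t : ℝ} (hn : 0 < n) (hR : R ≠ 0) (ht : 0 < t) :
    (4 * π * t) ^ (-n / 2) * exp (-R ^ 2 / (4 * t)) ≤
      (4 * π * (R ^ 2 / (2 * n))) ^ (-n / 2) * exp (-R ^ 2 / (4 * (R ^ 2 / (2 * n)))) := by
  have h := rpow_neg_mul_exp_neg_div_le (half_pos hn) (by positivity : 0 < π * R ^ 2)
    (by positivity : 0 < 4 * π * t)
  have hmax : π * R ^ 2 / (n / 2) = 4 * π * (R ^ 2 / (2 * n)) := by field_simp; ring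
  have hexp : ∀ u, u ≠ 0 → -(π * R ^ 2 / (4 * π * u)) = -R ^ 2 / (4 * u) := fun u hu => by
    field_simp
  rwa [hmax, hexp t ht.ne', hexp _ (by positivity), ← neg_div] at h

theorem gaussianArea_sphere (n : ℕ) (x₀ : EuclideanSpace ℝ (Fin (n + 1))) (t R : ℝ) :
    gaussianArea n x₀ t (Metric.sphere x₀ R) =
      ENNReal.ofReal ((4 * π * t) ^ (-(n : ℝ) / 2) * exp (-R ^ 2 / (4 * t))) *
        μH[(n : ℝ)] (Metric.sphere x₀ R) := by
  rw [gaussianArea, setLIntegral_congr_fun Metric.isClosed_sphere.measurableSet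
      (fun x hx => by rw [mem_sphere_iff_norm.mp hx]),
    setLIntegral_const, ENNReal.ofReal_mul' (exp_pos _).le]
  exact (mul_assoc _ _ _).symm

/-- For the round sphere `Sⁿ(R)` centered at the origin, the Gaussian surface area, as a
function of the scale `t₀ > 0`, is maximized at the self-shrinking scale `t₀ = R²/(2n)`. -/
theorem gaussianArea_sphere_le_self_shrinking_scale (n : ℕ) (hn : 1 ≤ n) (R : ℝ) (hR : 0 < R) :
    ∀ t₀ : ℝ, 0 < t₀ →
      gaussianArea n 0 t₀ (Metric.sphere (0 : EuclideanSpace ℝ (Fin (n + 1))) R) ≤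
        gaussianArea n 0 (R ^ 2 / (2 * n))
          (Metric.sphere (0 : EuclideanSpace ℝ (Fin (n + 1))) R) := by
  intro t₀ ht₀
  rw [gaussianArea_sphere, gaussianArea_sphere]
  gcongr ENNReal.ofReal ?_ * _
  exact heatKernel_le_self_shrinking_scale (Nat.cast_pos.mpr hn) hR.ne' ht₀
end

section
/- Explicit negative gradient flow of a diagonal quadratic on Hilbert space: let H be a real Hilbert space with a Hilbert basis (wᵢ)_{i ∈ ι}, and let μ : ι → ℝ be bounded (there is C with |μᵢ| ≤ C for all i). Define f : H → ℝ by f(w) = (1/2) ∑'ᵢ μᵢ · ⟪w, wᵢ⟫², and for w ∈ H and t ∈ ℝ define Ψ_t(w) = ∑'ᵢ exp(-μᵢ t) · ⟪w, wᵢ⟫ • wᵢ (the sum converges in H). Then f is differentiable with gradient ∇f(w) = ∑'ᵢ μᵢ ⟪w, wᵢ⟫ • wᵢ, and for each w ∈ H the curve γ(t) = Ψ_t(w) satisfies γ(0) = w and γ'(t) = -∇f(γ(t)) for all t ∈ ℝ. -/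
/-!
Bounded multipliers `c ∈ ℓ^∞(ι)` act on `H` as diagonal operators `diag c` in the basis `w`,
and `c ↦ diag c x` is continuous linear and multiplicative. Then `f x = ½ ⟪diag μ x, x⟫` with
`diag μ` symmetric, so `∇f x = diag μ x`, and `Ψ_t = diag (exp (t • -μ))` with the exponential
taken in the Banach algebra `ℓ^∞`, where it is computed pointwise. Differentiating
`t ↦ exp (t • -μ)` in `ℓ^∞` and pushing the derivative through `c ↦ diag c x` gives
`Ψ_t' x = diag (-μ) (Ψ_t x) = -∇f (Ψ_t x)`.
-/

open RealInnerProductSpace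
open scoped ENNReal lp

namespace lp

variable {ι : Type*} {p : ℝ≥0∞}

theorem norm_infty_mul_apply_le (c : ℓ^∞(ι, ℝ)) (g : ι → ℝ) (i : ι) :
    ‖c i * g i‖ ≤ ‖‖c‖ * g i‖ := by
  rw [norm_mul, norm_mul, norm_norm]
  exact mul_le_mul_of_nonneg_right (norm_apply_le_norm ENNReal.top_ne_zero c i) (norm_nonneg _)

def inftyMul (c : ℓ^∞(ι, ℝ)) (g : lp (fun _ : ι => ℝ) p) : lp (fun _ : ι => ℝ) p :=
  ⟨⇑c * ⇑g, ((lp.memℓp g).const_mul ‖c‖).mono' (norm_infty_mul_apply_le c g)⟩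

@[simp]
theorem inftyMul_apply (c : ℓ^∞(ι, ℝ)) (g : lp (fun _ : ι => ℝ) p) (i : ι) :
    inftyMul c g i = c i * g i :=
  rfl

theorem norm_inftyMul_le (c : ℓ^∞(ι, ℝ)) (g : lp (fun _ : ι => ℝ) p) (hp : p ≠ 0) :
    ‖inftyMul c g‖ ≤ ‖c‖ * ‖g‖ :=
  calc ‖inftyMul c g‖ ≤ ‖‖c‖ • g‖ := norm_mono hp (norm_infty_mul_apply_le c g)
    _ = ‖c‖ * ‖g‖ := by rw [norm_const_smul hp, norm_norm]

theorem infty_exp_apply (c : ℓ^∞(ι, ℝ)) (i : ι) : NormedSpace.exp c i = Real.exp (c i) := by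
  let eval : ℓ^∞(ι, ℝ) →+* ℝ :=
    { toFun := fun c => c i
      map_one' := by simp [infty_coeFn_one]
      map_mul' := fun c d => by simp [infty_coeFn_mul]
      map_zero' := rfl
      map_add' := fun c d => rfl }
  rw [Real.exp_eq_exp_ℝ]
  exact NormedSpace.map_exp eval (lipschitzWith_one_eval ∞ i).continuous c

end lp

theorem LinearMap.IsSymmetric.hasGradientAt_half_inner_self {F : Type*} [NormedAddCommGroup F]
    [InnerProductSpace ℝ F] [CompleteSpace F] {T : F →L[ℝ] F}
    (hT : (T : F →ₗ[ℝ] F).IsSymmetric) (x : F) :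
    HasGradientAt (fun y => 1 / 2 * ⟪T y, y⟫) (T x) x := by
  have hderiv : (1 / 2 : ℝ) • (2 • innerSL ℝ (T x)) = InnerProductSpace.toDual ℝ F (T x) := by
    ext y
    simp
  rw [hasGradientAt_iff_hasFDerivAt, ← hderiv]
  exact (hT.hasStrictFDerivAt_reApplyInnerSelf x).hasFDerivAt.const_mul (1 / 2)

namespace HilbertBasis

variable {ι H : Type*} [NormedAddCommGroup H] [InnerProductSpace ℝ H] (b : HilbertBasis ι ℝ H)

noncomputable def diagonal : ℓ^∞(ι, ℝ) →L[ℝ] H →L[ℝ] H :=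
  LinearMap.mkContinuous₂
    (LinearMap.mk₂ ℝ (fun c x => b.repr.symm (lp.inftyMul c (b.repr x)))
      (fun c d x => b.repr.injective <| lp.ext <| funext fun i => by simp [add_mul])
      (fun r c x => b.repr.injective <| lp.ext <| funext fun i => by simp [mul_assoc])
      (fun c x y => b.repr.injective <| lp.ext <| funext fun i => by simp [mul_add])
      (fun r c x => b.repr.injective <| lp.ext <| funext fun i => by simp [mul_left_comm]))
    1 fun c x => by
      simpa using lp.norm_inftyMul_le c (b.repr x) two_ne_zero

@[simp]
theorem repr_diagonal_apply (c : ℓ^∞(ι, ℝ)) (x : H) (i : ι) :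
    b.repr (b.diagonal c x) i = c i * b.repr x i := by
  simp [diagonal]

theorem hasSum_diagonal (c : ℓ^∞(ι, ℝ)) (x : H) :
    HasSum (fun i => (c i * ⟪x, b i⟫) • b i) (b.diagonal c x) := by
  convert b.hasSum_repr (b.diagonal c x) using 3 with i
  rw [repr_diagonal_apply, b.repr_apply_apply, real_inner_comm]

theorem diagonal_one_apply (x : H) : b.diagonal 1 x = x :=
  b.repr.injective <| lp.ext <| funext fun i => by simp [lp.infty_coeFn_one]

theorem diagonal_mul_apply (c d : ℓ^∞(ι, ℝ)) (x : H) :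
    b.diagonal (c * d) x = b.diagonal c (b.diagonal d x) :=
  b.repr.injective <| lp.ext <| funext fun i => by simp [lp.infty_coeFn_mul, mul_assoc]

theorem isSymmetric_diagonal (c : ℓ^∞(ι, ℝ)) : (b.diagonal c : H →ₗ[ℝ] H).IsSymmetric := by
  intro x y
  rw [ContinuousLinearMap.coe_coe, ← b.repr.inner_map_map, ← b.repr.inner_map_map x,
    lp.inner_eq_tsum, lp.inner_eq_tsum]
  refine tsum_congr fun i => ?_
  simp only [repr_diagonal_apply, Real.inner_apply]
  ring

theorem hasSum_inner_diagonal_self (c : ℓ^∞(ι, ℝ)) (x : H) :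
    HasSum (fun i => c i * ⟪x, b i⟫ ^ 2) ⟪b.diagonal c x, x⟫ := by
  refine (b.hasSum_inner_mul_inner (b.diagonal c x) x).congr_fun fun i => ?_
  rw [real_inner_comm (b i) (b.diagonal c x), ← b.repr_apply_apply, repr_diagonal_apply,
    b.repr_apply_apply, real_inner_comm (b i) x]
  ring

theorem hasDerivAt_diagonal_exp_smul (c : ℓ^∞(ι, ℝ)) (x : H) (t : ℝ) :
    HasDerivAt (fun s : ℝ => b.diagonal (NormedSpace.exp (s • c)) x)
      (b.diagonal c (b.diagonal (NormedSpace.exp (t • c)) x)) t := by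
  rw [← diagonal_mul_apply]
  exact (b.diagonal.flip x).hasFDerivAt.comp_hasDerivAt t (hasDerivAt_exp_smul_const' c t)

end HilbertBasis

/-- Explicit negative gradient flow of a diagonal quadratic on a Hilbert space: for a Hilbert
basis `(wᵢ)` and bounded coefficients `(μᵢ)`, the function `f(x) = (1/2) ∑' i, μᵢ ⟪x, wᵢ⟫²`
has gradient `∇f(x) = ∑' i, μᵢ ⟪x, wᵢ⟫ wᵢ`, and `Ψ_t(x) = ∑' i, e^{-μᵢ t} ⟪x, wᵢ⟫ wᵢ`
(the sum converging in `H`) is the negative gradient flow of `f` starting at `x`. -/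
theorem negGradientFlow_diagonal_quadratic_hilbert
    {H : Type*} [NormedAddCommGroup H] [InnerProductSpace ℝ H] [CompleteSpace H]
    {ι : Type*} (w : HilbertBasis ι ℝ H) (μ : ι → ℝ) (C : ℝ) (hC : ∀ i, |μ i| ≤ C)
    (f : H → ℝ) (hf : ∀ x : H, f x = 1 / 2 * ∑' i, μ i * ⟪x, w i⟫ ^ 2)
    (Ψ : ℝ → H → H)
    (hΨ : ∀ (t : ℝ) (x : H), Ψ t x = ∑' i, (Real.exp (-μ i * t) * ⟪x, w i⟫) • w i) :
    (∀ (t : ℝ) (x : H), Summable fun i => (Real.exp (-μ i * t) * ⟪x, w i⟫) • w i) ∧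
    (∀ x : H, HasGradientAt f (∑' i, (μ i * ⟪x, w i⟫) • w i) x) ∧
    (∀ x : H, Ψ 0 x = x ∧
      ∀ t : ℝ, HasDerivAt (fun s => Ψ s x) (-(∑' i, (μ i * ⟪Ψ t x, w i⟫) • w i)) t) := by
  let m : ℓ^∞(ι, ℝ) := ⟨μ, memℓp_infty ⟨C, Set.forall_mem_range.2 hC⟩⟩
  have hm : ⇑m = μ := rfl
  have hgrad (x : H) : ∑' i, (μ i * ⟪x, w i⟫) • w i = w.diagonal m x :=
    (w.hasSum_diagonal m x).tsum_eq
  have hflow (t : ℝ) (x : H) : HasSum (fun i => (Real.exp (-μ i * t) * ⟪x, w i⟫) • w i)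
      (w.diagonal (NormedSpace.exp (t • -m)) x) := by
    convert w.hasSum_diagonal (NormedSpace.exp (t • -m)) x using 4 with i
    rw [lp.infty_exp_apply, lp.coeFn_smul, lp.coeFn_neg, Pi.smul_apply, Pi.neg_apply, smul_eq_mul,
      hm, neg_mul, mul_neg, mul_comm]
  have hΨ_eq (t : ℝ) (x : H) : Ψ t x = w.diagonal (NormedSpace.exp (t • -m)) x := by
    rw [hΨ, (hflow t x).tsum_eq]
  refine ⟨fun t x => (hflow t x).summable, fun x => ?_, fun x => ⟨?_, fun t => ?_⟩⟩
  · have hf_eq : f = fun y => 1 / 2 * ⟪w.diagonal m y, y⟫ :=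
      funext fun y => by rw [hf, (w.hasSum_inner_diagonal_self m y).tsum_eq]
    rw [hf_eq, hgrad]
    exact (w.isSymmetric_diagonal m).hasGradientAt_half_inner_self x
  · rw [hΨ_eq, zero_smul, NormedSpace.exp_zero, w.diagonal_one_apply]
  · simpa only [hΨ_eq, hgrad, map_neg, neg_apply] using
      w.hasDerivAt_diagonal_exp_smul (-m) x t
end
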